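/- The polynomial F₂(x,t) = x⁶ + (3t² + 25/3)x⁴ + (3t⁴ + 30t² − 125/9)x² + t⁶ + (17/3)t⁴ + (475/9)t² + 625/9 is strictly positive for all (x,t) ∈ ℝ², i.e. it has no real zeros. -/
import Mathlib

/-- The polynomial `F₂(x,t)`. -/
noncomputable def F2 (x t : ℝ) : ℝ :=
  x ^ 6 + (3 * t ^ 2 + 25 / 3) * x ^ 4 + (3 * t ^ 4 + 30 * t ^ 2 - 125 / 9) * x ^ 2
    + t ^ 6 + (17 / 3) * t ^ 4 + (475 / 9) * t ^ 2 + 625 / 9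

theorem F2_pos : ∀ x t : ℝ, 0 < F2 x t := by
  intro x t
  unfold F2
  nlinarith [sq_nonneg x, sq_nonneg t, sq_nonneg (x*t), sq_nonneg (x^2+t^2), sq_nonneg (x^2-t^2), sq_nonneg (x^3), sq_nonneg (x^2*t), sq_nonneg (x*t^2), sq_nonneg (t^3), sq_nonneg (x^2+t^2-5/3), sq_nonneg (3*x^2-5)]
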